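/- arXiv:math/0602125 — 3 statements merged into one kernel-verified Lean document; each statement's English description precedes it below -/
import Mathlib

section
/- Let G be a finite group, N a normal subgroup, and H a Carter subgroup of G. Suppose that any two Carter subgroups of the subgroup M = HN are conjugate in M. Then the image of H in G/N is a Carter subgroup of G/N. -/
open Pointwise

/-- A Carter subgroup: a nilpotent self-normalizing subgroup. -/
def IsCarter {G : Type*} [Group G] (H : Subgroup G) : Prop :=
  Group.IsNilpotent H ∧ Subgroup.normalizer (H : Set G) = H

/-!
Frattini argument. Since `M = HN` is the full preimage of `HN/N`, it suffices that `M` is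
self-normalizing. If `g` normalizes `M`, then `gHg⁻¹` is a Carter subgroup of `M`, so by hypothesis
`m(gHg⁻¹)m⁻¹ = H` for some `m ∈ M`; hence `mg ∈ N_G(H) = H ≤ M` and `g ∈ M`.
-/

namespace IsCarter

open Subgroup

variable {G : Type*} [Group G] {H : Subgroup G}

theorem subgroupOf (hH : IsCarter H) {M : Subgroup G} (hHM : H ≤ M) :
    IsCarter (H.subgroupOf M) :=
  have := hH.1
  ⟨Group.nilpotent_of_mulEquiv (subgroupOfEquivOfLe hHM).symm,
    by rw [← subgroupOf_normalizer_eq hHM, hH.2]⟩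

theorem map_equiv (hH : IsCarter H) {G' : Type*} [Group G'] (f : G ≃* G') :
    IsCarter (H.map f.toMonoidHom) :=
  have := hH.1
  ⟨Group.nilpotent_of_mulEquiv (H.equivMapOfInjective _ f.injective),
    by rw [← map_equiv_normalizer_eq, hH.2]⟩

theorem conj_smul (hH : IsCarter H) (g : G) : IsCarter (MulAut.conj g • H) :=
  hH.map_equiv (MulAut.conj g)

theorem normalizer_le_of_conjugate {M : Subgroup G} (hH : IsCarter H) (hHM : H ≤ M)
    (hconj : ∀ K₁ K₂ : Subgroup G, K₁ ≤ M → K₂ ≤ M →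
      IsCarter (K₁.subgroupOf M) → IsCarter (K₂.subgroupOf M) →
      ∃ m ∈ M, MulAut.conj m • K₁ = K₂) :
    normalizer (M : Set G) ≤ M := by
  intro g hg
  have hgHM : MulAut.conj g • H ≤ M := by
    rw [← mem_normalizer_iff_map_conj_eq.mp hg]
    exact map_mono hHM
  obtain ⟨m, hm, hmgH⟩ :=
    hconj _ _ hgHM hHM ((hH.conj_smul g).subgroupOf hgHM) (hH.subgroupOf hHM)
  have hmg : m * g ∈ H := by
    rw [smul_smul, ← map_mul] at hmgH
    rw [← hH.2, mem_normalizer_iff_map_conj_eq]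
    exact hmgH
  simpa using M.mul_mem (M.inv_mem hm) (hHM hmg)

end IsCarter

theorem Subgroup.normalizer_le_of_normalizer_comap_le {G G' : Type*} [Group G] [Group G']
    {f : G →* G'} (hf : Function.Surjective f) {K : Subgroup G'}
    (h : normalizer (K.comap f : Set G) ≤ K.comap f) : normalizer (K : Set G') ≤ K := by
  intro x hx
  obtain ⟨g, rfl⟩ := hf x
  exact h (comap_normalizer_eq_of_surjective K hf ▸ hx)

theorem image_carter_in_quotient_general {G : Type*} [Group G]
    (N : Subgroup G) [N.Normal] (H : Subgroup G) (hH : IsCarter H)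
    (M : Subgroup G) (hM : M = H ⊔ N)
    (hconj : ∀ K₁ K₂ : Subgroup G, K₁ ≤ M → K₂ ≤ M →
      IsCarter (K₁.subgroupOf M) → IsCarter (K₂.subgroupOf M) →
      ∃ m ∈ M, MulAut.conj m • K₁ = K₂) :
    IsCarter (H.map (QuotientGroup.mk' N)) := by
  have hHM : H ≤ M := hM ▸ le_sup_left
  have hcomap : (H.map (QuotientGroup.mk' N)).comap (QuotientGroup.mk' N) = M := by
    rw [Subgroup.comap_map_eq, QuotientGroup.ker_mk', hM]
  have := hH.1
  refine ⟨Group.nilpotent_of_surjective _ ((QuotientGroup.mk' N).subgroupMap_surjective H),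
    le_antisymm ?_ Subgroup.le_normalizer⟩
  refine Subgroup.normalizer_le_of_normalizer_comap_le (QuotientGroup.mk'_surjective N) ?_
  rw [hcomap]
  exact hH.normalizer_le_of_conjugate hHM hconj

theorem image_carter_in_quotient {G : Type*} [Group G] [Finite G]
    (N : Subgroup G) [N.Normal] (H : Subgroup G) (hH : IsCarter H)
    (M : Subgroup G) (hM : M = H ⊔ N)
    (hconj : ∀ K₁ K₂ : Subgroup G, K₁ ≤ M → K₂ ≤ M →
      IsCarter (K₁.subgroupOf M) → IsCarter (K₂.subgroupOf M) →
      ∃ m ∈ M, MulAut.conj m • K₁ = K₂) :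
    IsCarter (H.map (QuotientGroup.mk' N)) :=
  image_carter_in_quotient_general N H hH M hM hconj
end

section
/- Let G be a finite group in which any two Carter subgroups are conjugate, and let H be a Carter subgroup of G. Then N_G(M) = M for every subgroup M of G containing H, provided Carter subgroups of M are conjugate in M; in particular, if Carter subgroups of every subgroup of G are conjugate, every subgroup containing a Carter subgroup is self-normalizing. -/
open Pointwise

theorem Subgroup.mem_of_conj_smul_eq_of_normalizer_eq {G : Type*} [Group G] {H : Subgroup G}
    (hH : normalizer (H : Set G) = H) {g : G} (hg : MulAut.conj g • H = H) : g ∈ H :=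
  hH ▸ Subgroup.mem_normalizer_iff_map_conj_eq.mpr hg

theorem overgroup_of_carter_self_normalizing_general {G : Type*} [Group G]
    (H M : Subgroup G) (hH : IsCarter H) (hHM : H ≤ M)
    (hconj : ∀ K₁ K₂ : Subgroup G, K₁ ≤ M → K₂ ≤ M →
      IsCarter (K₁.subgroupOf M) → IsCarter (K₂.subgroupOf M) →
      ∃ m ∈ M, MulAut.conj m • K₁ = K₂)
    (hcart : ∀ x ∈ Subgroup.normalizer (M : Set G), MulAut.conj x • H ≤ M ∧
      IsCarter ((MulAut.conj x • H).subgroupOf M)) :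
    Subgroup.normalizer (M : Set G) = M := by
  refine le_antisymm (fun x hx => ?_) Subgroup.le_normalizer
  obtain ⟨hHxM, hHx⟩ := hcart x hx
  have hHcarterM : IsCarter (H.subgroupOf M) := by
    simpa only [map_one, one_smul] using (hcart 1 (one_mem _)).2
  obtain ⟨m, hm, hmx⟩ := hconj _ H hHxM hHM hHx hHcarterM
  have hmxH : m * x ∈ H := H.mem_of_conj_smul_eq_of_normalizer_eq hH.2 (by rw [map_mul, mul_smul, hmx])
  exact (M.mul_mem_cancel_left hm).mp (hHM hmxH)

theorem overgroup_of_carter_self_normalizing {G : Type*} [Group G] [Finite G]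
    (H M : Subgroup G) (hH : IsCarter H) (hHM : H ≤ M)
    (hconj : ∀ K₁ K₂ : Subgroup G, K₁ ≤ M → K₂ ≤ M →
      IsCarter (K₁.subgroupOf M) → IsCarter (K₂.subgroupOf M) →
      ∃ m ∈ M, MulAut.conj m • K₁ = K₂)
    (hcart : ∀ x ∈ Subgroup.normalizer (M : Set G), MulAut.conj x • H ≤ M ∧
      IsCarter ((MulAut.conj x • H).subgroupOf M)) :
    Subgroup.normalizer (M : Set G) = M :=
  overgroup_of_carter_self_normalizing_general H M hH hHM hconj hcart
end

section
/- Let X be a finite group with a minimal normal subgroup B such that X/B is nilpotent (e.g., X = BH for a Carter subgroup H). If X has non-conjugate Carter subgroups and every soluble quotient situation gives conjugacy, then B is the unique minimal normal subgroup of X. -/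
/-!
A second minimal normal subgroup `M ≠ B` meets `B` trivially, so it embeds into `X ⧸ B`. Since
`X = B H`, that quotient is an image of the nilpotent group `H`, hence soluble, and so `M` would be
soluble.
-/

open Pointwise

section

variable {G : Type*} [Group G] {M N H : Subgroup G}

theorem QuotientGroup.map_mk'_eq_top_of_sup_eq_top [N.Normal] (hNH : N ⊔ H = ⊤) :
    H.map (QuotientGroup.mk' N) = ⊤ := by
  rw [← bot_sup_eq (H.map _), ← QuotientGroup.map_mk'_self N, ← Subgroup.map_sup, hNH,
    ← MonoidHom.range_eq_map, QuotientGroup.range_mk']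

theorem isNilpotent_quotient_of_sup_eq_top [N.Normal] [Group.IsNilpotent H] (hNH : N ⊔ H = ⊤) :
    Group.IsNilpotent (G ⧸ N) := by
  refine Group.nilpotent_of_surjective ((QuotientGroup.mk' N).comp H.subtype) ?_
  rw [← MonoidHom.range_eq_top, MonoidHom.range_comp, H.range_subtype,
    QuotientGroup.map_mk'_eq_top_of_sup_eq_top hNH]

theorem isSolvable_of_disjoint_of_isSolvable_quotient [N.Normal] [Group.IsSolvable (G ⧸ N)]
    (hMN : Disjoint M N) : Group.IsSolvable M := by
  refine Group.isSolvable_of_isSolvable_injective (f := (QuotientGroup.mk' N).domRestrict M) ?_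
  rw [← MonoidHom.ker_eq_bot_iff, MonoidHom.ker_domRestrict, QuotientGroup.ker_mk']
  exact Subgroup.subgroupOf_eq_bot.mpr hMN.symm

theorem disjoint_or_le_of_minimal_normal [M.Normal] [N.Normal]
    (hMmin : ∀ C : Subgroup G, C.Normal → C ≤ M → C ≠ ⊥ → C = M) : Disjoint M N ∨ M ≤ N := by
  rw [disjoint_iff, or_iff_not_imp_left]
  intro hMN
  rw [← hMmin (M ⊓ N) inferInstance inf_le_left hMN]
  exact inf_le_right

end

theorem unique_minimal_normal_general {X : Type*} [Group X]
    (B : Subgroup X) (hBn : B.Normal)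
    (hBmin : ∀ C : Subgroup X, C.Normal → C ≤ B → C ≠ ⊥ → C = B)
    (H : Subgroup X) (hH : IsCarter H) (hBH : B ⊔ H = ⊤)
    (hns : ∀ M : Subgroup X, M.Normal → M ≠ ⊥ →
      (∀ C : Subgroup X, C.Normal → C ≤ M → C ≠ ⊥ → C = M) → ¬IsSolvable M) :
    ∀ M : Subgroup X, M.Normal → M ≠ ⊥ →
      (∀ C : Subgroup X, C.Normal → C ≤ M → C ≠ ⊥ → C = M) → M = B := by
  intro M hMn hMbot hMmin
  have : Group.IsNilpotent H := hH.1
  have : Group.IsNilpotent (X ⧸ B) := isNilpotent_quotient_of_sup_eq_top hBH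
  rcases disjoint_or_le_of_minimal_normal (N := B) hMmin with hMB | hMB
  · exact absurd (isSolvable_of_disjoint_of_isSolvable_quotient hMB) (hns M hMn hMbot hMmin)
  · exact hBmin M hMn hMB hMbot

theorem unique_minimal_normal {X : Type*} [Group X] [Finite X]
    (B : Subgroup X) (hBn : B.Normal) (hBbot : B ≠ ⊥)
    (hBmin : ∀ C : Subgroup X, C.Normal → C ≤ B → C ≠ ⊥ → C = B)
    (H : Subgroup X) (hH : IsCarter H) (hBH : B ⊔ H = ⊤)
    (hns : ∀ M : Subgroup X, M.Normal → M ≠ ⊥ →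
      (∀ C : Subgroup X, C.Normal → C ≤ M → C ≠ ⊥ → C = M) → ¬IsSolvable M) :
    ∀ M : Subgroup X, M.Normal → M ≠ ⊥ →
      (∀ C : Subgroup X, C.Normal → C ≤ M → C ≠ ⊥ → C = M) → M = B :=
  unique_minimal_normal_general B hBn hBmin H hH hBH hns
end
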